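/- arXiv:2502.08637 — 3 statements merged into one kernel-verified Lean document; each statement's English description precedes it below -/
import Mathlib

section
/- Let u, ψ, x, x₀ ∈ ℝ with x ≥ 0, u ≥ 0, and ψ ≠ 0. Then x·√((x − u)² + ψ²) ≤ (x³ + (u² + 2ψ² + (x₀ − u)² − 4·u·x₀)·x + 2·u·x₀²) / (2·√((x₀ − u)² + ψ²)). -/
/-- MM surrogate upper bound for the nonconvex component `x √((x-u)² + ψ²)`:
for `x ≥ 0`, `u ≥ 0`, `ψ ≠ 0`,
`x √((x-u)²+ψ²) ≤ (x³ + (u² + 2ψ² + (x₀-u)² - 4 u x₀) x + 2 u x₀²) / (2 √((x₀-u)²+ψ²))`. -/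
theorem stmt_6 (u ψ x x₀ : ℝ) (hx : 0 ≤ x) (hu : 0 ≤ u) (hψ : ψ ≠ 0) :
    x * Real.sqrt ((x - u) ^ 2 + ψ ^ 2)
      ≤ (x ^ 3 + (u ^ 2 + 2 * ψ ^ 2 + (x₀ - u) ^ 2 - 4 * u * x₀) * x + 2 * u * x₀ ^ 2)
        / (2 * Real.sqrt ((x₀ - u) ^ 2 + ψ ^ 2)) := by
  set D := Real.sqrt ((x₀ - u) ^ 2 + ψ ^ 2) with hDdef
  set S := Real.sqrt ((x - u) ^ 2 + ψ ^ 2) with hSdef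
  have hψ2 : 0 < ψ ^ 2 := by positivity
  have hD : 0 < D := Real.sqrt_pos.mpr (by positivity)
  have hD2 : D ^ 2 = (x₀ - u) ^ 2 + ψ ^ 2 := Real.sq_sqrt (by positivity)
  have hS2 : S ^ 2 = (x - u) ^ 2 + ψ ^ 2 := Real.sq_sqrt (by positivity)
  have hSnn : 0 ≤ S := Real.sqrt_nonneg _
  have h1 : S * (2 * D) ≤ (x - u) ^ 2 + ψ ^ 2 + D ^ 2 := by
    nlinarith [sq_nonneg (S - D)]
  have h2 : x * (S * (2 * D)) ≤ x * ((x - u) ^ 2 + ψ ^ 2 + D ^ 2) :=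
    mul_le_mul_of_nonneg_left h1 hx
  rw [le_div_iff₀ (by positivity)]
  nlinarith [h2, mul_nonneg hu (sq_nonneg (x - x₀))]
end

section
/- Fix K ∈ ℕ, an index k ∈ Fin K, scalars a : Fin K → ℂ, and σ² > 0. Set J = (∑ i, |a i|²) + σ² and, for v ∈ ℂ, e(v) = (∑ i, |v·(a i)|²) + σ²·|v|² + 1 − 2·Re(v·(a k)). Then for all v ∈ ℂ and all α > 0, α·e(v) − log α ≥ 1 − log(1 + |a k|² / ((∑ i ≠ k, |a i|²) + σ²)), and equality holds at v = conj(a k)/J and α = J/(J − |a k|²). In particular, the infimum over v ∈ ℂ and α > 0 of α·e(v) − log α equals 1 − log(1 + SINR_k) with SINR_k = |a k|² / ((∑ i ≠ k, |a i|²) + σ²). -/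
/-!
Completing the square gives `e(v) = J ‖v - conj(a_k)/J‖² + (J - |a_k|²)/J`, so `e` is minimised
at `v = conj(a_k)/J` with minimum `m = (1 + SINR)⁻¹`. For fixed `t > 0`, `α t - log α` is
minimised at `α = t⁻¹` with value `1 + log t` (this is `log x ≤ x - 1`), and `1 + log t` is
increasing in `t`; hence the joint minimum is `1 + log m = 1 - log (1 + SINR)`.
-/

open Set Finset Real

lemma one_add_log_le_mul_sub_log {t α : ℝ} (ht : 0 < t) (hα : 0 < α) :
    1 + log t ≤ α * t - log α := by
  have h := log_le_sub_one_of_pos (mul_pos hα ht)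
  rw [log_mul hα.ne' ht.ne'] at h
  linarith

lemma inv_mul_self_sub_log_inv {t : ℝ} (ht : t ≠ 0) : t⁻¹ * t - log t⁻¹ = 1 + log t := by
  rw [inv_mul_cancel₀ ht, log_inv]
  ring

lemma isLeast_mul_sub_log {X : Type*} {f : X → ℝ} {m : ℝ} (hm : 0 < m)
    (hf : IsLeast (range f) m) :
    IsLeast {y | ∃ x, ∃ α : ℝ, 0 < α ∧ y = α * f x - log α} (1 + log m) := by
  obtain ⟨⟨x₀, hx₀⟩, hlow⟩ := hf
  refine ⟨⟨x₀, m⁻¹, inv_pos.mpr hm, by rw [hx₀, inv_mul_self_sub_log_inv hm.ne']⟩, ?_⟩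
  rintro _ ⟨x, α, hα, rfl⟩
  have hfx : m ≤ f x := hlow ⟨x, rfl⟩
  calc 1 + log m ≤ 1 + log (f x) := by gcongr
    _ ≤ α * f x - log α := one_add_log_le_mul_sub_log (hm.trans_le hfx) hα

lemma mul_norm_sq_sub_two_re_eq {J : ℝ} (hJ : J ≠ 0) (v b : ℂ) :
    J * ‖v‖ ^ 2 - 2 * (v * b).re = J * ‖v - starRingEnd ℂ b / J‖ ^ 2 - ‖b‖ ^ 2 / J := by
  simp only [Complex.sq_norm, Complex.normSq_apply, Complex.sub_re, Complex.sub_im,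
    Complex.div_ofReal_re, Complex.div_ofReal_im, Complex.conj_re, Complex.conj_im,
    Complex.mul_re]
  field_simp
  ring

lemma sum_norm_mul_sq {ι : Type*} [Fintype ι] (v : ℂ) (a : ι → ℂ) :
    ∑ i, ‖v * a i‖ ^ 2 = ‖v‖ ^ 2 * ∑ i, ‖a i‖ ^ 2 := by
  simp only [norm_mul, mul_pow, Finset.mul_sum]

lemma mse_eq_mul_norm_sq_add {ι : Type*} [Fintype ι] [DecidableEq ι] (a : ι → ℂ) (k : ι)
    (σ2 : ℝ) {J : ℝ} (hJ : J = (∑ i, ‖a i‖ ^ 2) + σ2) (hJ0 : J ≠ 0) (v : ℂ) :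
    (∑ i, ‖v * a i‖ ^ 2) + σ2 * ‖v‖ ^ 2 + 1 - 2 * (v * a k).re
      = J * ‖v - starRingEnd ℂ (a k) / J‖ ^ 2
        + ((∑ i ∈ univ.erase k, ‖a i‖ ^ 2) + σ2) / J := by
  have hsplit := Finset.sum_erase_add univ (fun i => ‖a i‖ ^ 2) (mem_univ k)
  calc (∑ i, ‖v * a i‖ ^ 2) + σ2 * ‖v‖ ^ 2 + 1 - 2 * (v * a k).re
      = J * ‖v‖ ^ 2 - 2 * (v * a k).re + 1 := by rw [sum_norm_mul_sq, hJ]; ring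
    _ = J * ‖v - starRingEnd ℂ (a k) / J‖ ^ 2 + (J - ‖a k‖ ^ 2) / J := by
      rw [mul_norm_sq_sub_two_re_eq hJ0, sub_div, div_self hJ0]; ring
    _ = _ := by congr 2; rw [hJ, ← hsplit]; ring

/-- Per-user core of Lemma 1: with `J = (∑ i, |a i|²) + σ²`,
`e(v) = (∑ i, |v a_i|²) + σ² |v|² + 1 - 2 Re(v a_k)`, and
`SINR = |a_k|² / ((∑_{i≠k} |a_i|²) + σ²)`, for all `v ∈ ℂ` and `α > 0`,
`α e(v) - log α ≥ 1 - log(1 + SINR)`, with equality at `v = conj(a_k)/J`,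
`α = J/(J - |a_k|²)`; in particular the infimum over `(v, α)` equals `1 - log(1 + SINR)`. -/
theorem stmt_12 (K : ℕ) (k : Fin K) (a : Fin K → ℂ) (σ2 : ℝ) (hσ : 0 < σ2)
    (J : ℝ) (hJ : J = (∑ i, ‖a i‖ ^ 2) + σ2)
    (e : ℂ → ℝ)
    (he : ∀ v : ℂ, e v = (∑ i, ‖v * a i‖ ^ 2) + σ2 * ‖v‖ ^ 2 + 1
        - 2 * (v * a k).re)
    (SINR : ℝ)
    (hSINR : SINR = ‖a k‖ ^ 2
        / ((∑ i ∈ Finset.univ.erase k, ‖a i‖ ^ 2) + σ2)) :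
    (∀ v : ℂ, ∀ α : ℝ, 0 < α →
        α * e v - Real.log α ≥ 1 - Real.log (1 + SINR)) ∧
    ((J / (J - ‖a k‖ ^ 2)) * e ((starRingEnd ℂ) (a k) / (J : ℂ))
        - Real.log (J / (J - ‖a k‖ ^ 2)) = 1 - Real.log (1 + SINR)) ∧
    IsGLB {y : ℝ | ∃ v : ℂ, ∃ α : ℝ, 0 < α ∧ y = α * e v - Real.log α}
      (1 - Real.log (1 + SINR)) := by
  set w : ℂ := starRingEnd ℂ (a k) / J
  set D : ℝ := (∑ i ∈ univ.erase k, ‖a i‖ ^ 2) + σ2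
  have hD : 0 < D := by positivity
  have hJD : J = D + ‖a k‖ ^ 2 := by
    rw [hJ, ← Finset.sum_erase_add univ _ (mem_univ k)]
    ring
  have hJpos : 0 < J := by rw [hJD]; positivity
  have hSINR' : 1 + SINR = J / D := by
    rw [hSINR, hJD]
    field_simp
  have he' : ∀ v, e v = J * ‖v - w‖ ^ 2 + (1 + SINR)⁻¹ := fun v => by
    rw [he, mse_eq_mul_norm_sq_add a k σ2 hJ hJpos.ne', hSINR', inv_div]
  have hew : e w = (1 + SINR)⁻¹ := by simp [he']
  have hleast : IsLeast (range e) (1 + SINR)⁻¹ :=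
    ⟨⟨w, hew⟩, by rintro _ ⟨v, rfl⟩; rw [he']; nlinarith [sq_nonneg ‖v - w‖]⟩
  have hpos : 0 < 1 + SINR := by rw [hSINR']; positivity
  have hα : J / (J - ‖a k‖ ^ 2) = 1 + SINR := by rw [hSINR', hJD, add_sub_cancel_right]
  have hvalue : 1 + log (1 + SINR)⁻¹ = 1 - log (1 + SINR) := by rw [log_inv]; ring
  have hwmmse := isLeast_mul_sub_log (inv_pos.mpr hpos) hleast
  rw [hvalue] at hwmmse
  refine ⟨fun v α hα => hwmmse.2 ⟨v, α, hα, rfl⟩, ?_, hwmmse.isGLB⟩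
  rw [hα, hew, mul_inv_cancel₀ hpos.ne']
end

section
/- Let L ≥ 1 be a natural number, Δ > 0, and S_x, x_end ∈ ℝ with L·Δ ≤ x_end ≤ S_x. Let z : Fin L → ℝ satisfy 0 ≤ z l ≤ 1 for all l and ∑ l, z l > 0, and define the spacings ω l = Δ + ((x_end − L·Δ) / (∑ j, z j))·(z l) and the cumulative positions x_l = ∑_{i ≤ l} ω i. Then: (a) ω l ≥ Δ for every l; (b) the positions are strictly increasing with consecutive gaps x_l − x_{l−1} = ω l ≥ Δ; (c) the last position equals x_end; and (d) every position x_l satisfies 0 ≤ x_l ≤ S_x. -/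
/-- KDL-Transformer constraint guarantees: with `1 ≤ L`, `Δ > 0`,
`L·Δ ≤ x_end ≤ S_x`, spacing weights `z ∈ [0,1]^L` with positive sum, spacings
`ω l = Δ + ((x_end - L·Δ)/∑ j, z j)·z l`, and cumulative positions
`pos l = ∑_{i ≤ l} ω i`, we have: (a) `ω l ≥ Δ`; (b) the positions are strictly
increasing with consecutive gaps `pos (l+1) - pos l = ω (l+1) ≥ Δ`; (c) the last
position equals `x_end`; and (d) every position satisfies `0 ≤ pos l ≤ S_x`. -/
theorem stmt_15 (L : ℕ) (hL : 1 ≤ L) (Δ Sx xend : ℝ) (hΔ : 0 < Δ)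
    (hxl : (L : ℝ) * Δ ≤ xend) (hxu : xend ≤ Sx)
    (z : Fin L → ℝ) (hz0 : ∀ l, 0 ≤ z l) (hz1 : ∀ l, z l ≤ 1) (hzs : 0 < ∑ l, z l)
    (ω : Fin L → ℝ)
    (hω : ∀ l, ω l = Δ + ((xend - (L : ℝ) * Δ) / (∑ j, z j)) * z l)
    (pos : Fin L → ℝ)
    (hpos : ∀ l, pos l = ∑ i ∈ Finset.univ.filter (fun i => i ≤ l), ω i) :
    (∀ l, Δ ≤ ω l) ∧
    (StrictMono pos) ∧
    (∀ (l : ℕ) (h : l + 1 < L),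
        pos ⟨l + 1, h⟩ - pos ⟨l, Nat.lt_of_succ_lt h⟩ = ω ⟨l + 1, h⟩ ∧
        Δ ≤ ω ⟨l + 1, h⟩) ∧
    (pos ⟨L - 1, by omega⟩ = xend) ∧
    (∀ l, 0 ≤ pos l ∧ pos l ≤ Sx) := by
  have hc : 0 ≤ (xend - (L : ℝ) * Δ) / (∑ j, z j) :=
    div_nonneg (by linarith) hzs.le
  have ha : ∀ l, Δ ≤ ω l := by
    intro l
    rw [hω l]
    nlinarith [mul_nonneg hc (hz0 l)]
  have hωpos : ∀ l, 0 < ω l := fun l => lt_of_lt_of_le hΔ (ha l)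
  have hmono : StrictMono pos := by
    intro a b hab
    rw [hpos a, hpos b]
    refine Finset.sum_lt_sum_of_subset ?_ (i := b) ?_ ?_ (hωpos b) ?_
    · intro i hi
      simp only [Finset.mem_filter, Finset.mem_univ, true_and] at hi ⊢
      exact le_trans hi hab.le
    · simp
    · simp [not_le.mpr hab]
    · intro j _ _; exact (hωpos j).le
  have hgap : ∀ (l : ℕ) (h : l + 1 < L),
      pos ⟨l + 1, h⟩ - pos ⟨l, Nat.lt_of_succ_lt h⟩ = ω ⟨l + 1, h⟩ := by
    intro l h
    rw [hpos, hpos]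
    have hset : Finset.univ.filter (fun i => i ≤ (⟨l + 1, h⟩ : Fin L)) =
        insert (⟨l + 1, h⟩ : Fin L)
          (Finset.univ.filter (fun i => i ≤ (⟨l, Nat.lt_of_succ_lt h⟩ : Fin L))) := by
      ext i
      simp only [Finset.mem_filter, Finset.mem_univ, true_and, Finset.mem_insert,
        Fin.le_def, Fin.ext_iff]
      omega
    rw [hset, Finset.sum_insert (by simp [Fin.le_def])]
    ring
  have hlast : pos ⟨L - 1, by omega⟩ = xend := by
    have huniv : Finset.univ.filter (fun i => i ≤ (⟨L - 1, by omega⟩ : Fin L)) =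
        Finset.univ := by
      ext i
      simp only [Finset.mem_filter, Finset.mem_univ, true_and, Fin.le_def, iff_true]
      omega
    rw [hpos, huniv]
    have : ∑ i, ω i = (L : ℝ) * Δ + ((xend - (L : ℝ) * Δ) / (∑ j, z j)) * (∑ j, z j) := by
      simp only [hω]
      rw [Finset.sum_add_distrib, ← Finset.mul_sum]
      simp [Finset.card_univ, mul_comm]
    rw [this, div_mul_cancel₀ _ (ne_of_gt hzs)]
    ring
  refine ⟨ha, hmono, fun l h => ⟨hgap l h, ha _⟩, hlast, fun l => ⟨?_, ?_⟩⟩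
  · rw [hpos]
    exact Finset.sum_nonneg fun i _ => (hωpos i).le
  · have hle : pos l ≤ pos ⟨L - 1, by omega⟩ := by
      apply hmono.monotone
      simp [Fin.le_def]
      omega
    rw [hlast] at hle
    linarith
end
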